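/- arXiv:2605.29032 — 2 statements merged into one kernel-verified Lean document; each statement's English description precedes it below -/
import Mathlib

section
/- Uniform one-step TV bound on the policy value gap: Let P and P̂ be two transition kernels on the same finite MDP (reward r with 0 ≤ r ≤ R_max, discount γ ∈ (0,1), initial distribution ρ₀). Then for every stationary policy π, |V_π(P) − V_π(P̂)| ≤ (R_max/(1−γ)²) · max_{(s,a)} TV(P(·|s,a), P̂(·|s,a)). -/
open Finset Real

/-- `p` is a probability mass function on a finite type. -/
def IsPMF {X : Type*} [Fintype X] (p : X → ℝ) : Prop :=
  (∀ x, 0 ≤ p x) ∧ ∑ x, p x = 1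

/-- `P` is a transition kernel: each `P s a` is a pmf on states. -/
def IsKernel {S A : Type*} [Fintype S] [Fintype A] (P : S → A → S → ℝ) : Prop :=
  ∀ s a, IsPMF (P s a)

/-- `pol` is a stationary policy: each `pol s` is a pmf on actions. -/
def IsPolicy {S A : Type*} [Fintype S] [Fintype A] (pol : S → A → ℝ) : Prop :=
  ∀ s, IsPMF (pol s)

/-- `V` satisfies the Bellman evaluation equation for policy `pol` under kernel `P`,
reward `r` and discount `γ`. -/
def IsValue {S A : Type*} [Fintype S] [Fintype A] (P : S → A → S → ℝ) (pol : S → A → ℝ)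
    (r : S → A → ℝ) (γ : ℝ) (V : S → ℝ) : Prop :=
  ∀ s, V s = ∑ a, pol s a * (r s a + γ * ∑ s', P s a s' * V s')

/-- `d` is the (unnormalized) discounted state-action occupancy of `pol` under kernel `P`
with initial distribution `ρ₀` and discount `γ`. -/
def IsOcc {S A : Type*} [Fintype S] [Fintype A] (P : S → A → S → ℝ) (pol : S → A → ℝ)
    (ρ₀ : S → ℝ) (γ : ℝ) (d : S → A → ℝ) : Prop :=
  ∀ s a, d s a = pol s a * (ρ₀ s + γ * ∑ x : S × A, d x.1 x.2 * P x.1 x.2 s)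

/-- ℓ₁ distance between two pmfs on a finite type. -/
noncomputable def l1Dist {X : Type*} [Fintype X] (p q : X → ℝ) : ℝ :=
  ∑ x, |p x - q x|

/-- Total variation distance between two pmfs on a finite type. -/
noncomputable def tvDist {X : Type*} [Fintype X] (p q : X → ℝ) : ℝ :=
  (1 / 2) * ∑ x, |p x - q x|

/-- Kullback-Leibler divergence between two pmfs on a finite type (finite under
absolute continuity). -/
noncomputable def klF {X : Type*} [Fintype X] (p q : X → ℝ) : ℝ :=
  ∑ x, p x * Real.log (p x / q x)

/-- `d_data` satisfies κ-coverage for the policy set `Pol` under kernel `P`: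
every occupancy of a policy in `Pol` is dominated by `κ · d_data`. -/
def KappaCoverage {S A : Type*} [Fintype S] [Fintype A] (P : S → A → S → ℝ) (ρ₀ : S → ℝ)
    (γ : ℝ) (Pol : Set (S → A → ℝ)) (ddata : S → A → ℝ) (κ : ℝ) : Prop :=
  ∀ pol ∈ Pol, ∀ dpol : S → A → ℝ, IsOcc P pol ρ₀ γ dpol → ∀ s a, dpol s a ≤ κ * ddata s a

/-- Critic discrepancy `Δ_{D,P̂}(s,a)`. -/
noncomputable def critDelta {S A : Type*} [Fintype S] (P Phat : S → A → S → ℝ)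
    (D : S → A → S → ℝ) (s : S) (a : A) : ℝ :=
  (∑ s', P s a s' * D s a s') - ∑ s', Phat s a s' * D s a s'

/-- Supremum over the critic class of the critic discrepancy at `(s,a)`. -/
noncomputable def critSup {S A : Type*} [Fintype S] (𝒟 : Set (S → A → S → ℝ))
    (P Phat : S → A → S → ℝ) (s : S) (a : A) : ℝ :=
  sSup {y | ∃ D ∈ 𝒟, y = critDelta P Phat D s a}

/-!
The value function `V` takes values in `[0, Rmax / (1 - γ)]`, so against `V` the one-step model
error `(P - P̂) V` at any `(s, a)` is at most `Rmax / (1 - γ) · TV(P(·|s,a), P̂(·|s,a))`.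
Subtracting the Bellman equations, `‖V - V̂‖_∞ ≤ γ (Rmax / (1 - γ) · ε + ‖V - V̂‖_∞)`, which
gives `‖V - V̂‖_∞ ≤ Rmax ε / (1 - γ)²`; averaging against `ρ₀` concludes.
-/

section Averaging

variable {X : Type*} [Fintype X]

theorem IsPMF.sum_mul_le {w f : X → ℝ} {c : ℝ} (hw : IsPMF w) (hf : ∀ x, f x ≤ c) :
    ∑ x, w x * f x ≤ c :=
  calc ∑ x, w x * f x ≤ ∑ x, w x * c :=
        sum_le_sum fun x _ => mul_le_mul_of_nonneg_left (hf x) (hw.1 x)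
    _ = c := by rw [← sum_mul, hw.2, one_mul]

theorem IsPMF.abs_sum_mul_le {w f : X → ℝ} {c : ℝ} (hw : IsPMF w) (hf : ∀ x, |f x| ≤ c) :
    |∑ x, w x * f x| ≤ c := by
  rw [abs_le]
  constructor
  · have := hw.sum_mul_le (f := fun x => -f x) fun x => neg_le.mp (abs_le.mp (hf x)).1
    simp only [mul_neg, sum_neg_distrib] at this
    linarith
  · exact hw.sum_mul_le fun x => (abs_le.mp (hf x)).2

/-- Since `p - q` has total mass zero, `f` may be recentred at the midpoint of `[lo, hi]`. -/
theorem abs_sum_mul_sub_sum_mul_le_tvDist {p q f : X → ℝ} {lo hi : ℝ}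
    (hpq : ∑ x, p x = ∑ x, q x) (hf : ∀ x, lo ≤ f x ∧ f x ≤ hi) :
    |∑ x, p x * f x - ∑ x, q x * f x| ≤ (hi - lo) * tvDist p q := by
  set m := (lo + hi) / 2 with hm
  have hcentre : ∑ x, p x * f x - ∑ x, q x * f x = ∑ x, (p x - q x) * (f x - m) := by
    simp only [sub_mul, mul_sub, sum_sub_distrib, ← sum_mul, hpq]
    ring
  calc |∑ x, p x * f x - ∑ x, q x * f x|
      ≤ ∑ x, |p x - q x| * |f x - m| := by
        rw [hcentre]
        exact (abs_sum_le_sum_abs _ _).trans_eq (sum_congr rfl fun x _ => abs_mul _ _)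
    _ ≤ ∑ x, |p x - q x| * ((hi - lo) / 2) := by
        refine sum_le_sum fun x _ => mul_le_mul_of_nonneg_left ?_ (abs_nonneg _)
        obtain ⟨hlo, hhi⟩ := hf x
        rw [abs_le, hm]; constructor <;> linarith
    _ = (hi - lo) * tvDist p q := by rw [← sum_mul, tvDist]; ring

end Averaging

section Value

variable {S A : Type*} [Fintype S] [Fintype A] {P : S → A → S → ℝ} {pol : S → A → ℝ}
  {r : S → A → ℝ} {γ : ℝ} {V : S → ℝ}

theorem IsValue.neg (hV : IsValue P pol r γ V) : IsValue P pol (-r) γ (-V) := fun s => by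
  rw [Pi.neg_apply, hV s, ← sum_neg_distrib]
  refine sum_congr rfl fun a _ => ?_
  simp only [Pi.neg_apply, mul_neg, sum_neg_distrib]
  ring

/-- Evaluate the Bellman equation at a state where `V` is maximal. -/
theorem IsValue.le_of_reward_le [Nonempty S] (hP : IsKernel P) (hpol : IsPolicy pol)
    (hγ0 : 0 ≤ γ) (hγ1 : γ < 1) (hV : IsValue P pol r γ V) {Rmax : ℝ}
    (hr : ∀ s a, r s a ≤ Rmax) (s : S) : V s ≤ Rmax / (1 - γ) := by
  obtain ⟨sMax, -, hsMax⟩ := exists_max_image univ V univ_nonempty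
  have hfixed : V sMax ≤ Rmax + γ * V sMax := by
    refine (hV sMax).trans_le ?_
    refine (hpol sMax).sum_mul_le fun a => add_le_add (hr sMax a) ?_
    exact mul_le_mul_of_nonneg_left ((hP sMax a).sum_mul_le fun s' => hsMax s' (mem_univ _)) hγ0
  rw [le_div_iff₀ (sub_pos.mpr hγ1)]
  nlinarith [hsMax s (mem_univ _)]

theorem IsValue.nonneg_of_reward_nonneg [Nonempty S] (hP : IsKernel P) (hpol : IsPolicy pol)
    (hγ0 : 0 ≤ γ) (hγ1 : γ < 1) (hV : IsValue P pol r γ V) (hr : ∀ s a, 0 ≤ r s a) (s : S) :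
    0 ≤ V s := by
  simpa using hV.neg.le_of_reward_le hP hpol hγ0 hγ1 (Rmax := 0)
    (fun s a => neg_nonpos.mpr (hr s a)) s

/-- The simulation lemma: at a state where `|V - Vhat|` is maximal, the two Bellman equations
differ by the one-step model error plus a `γ`-contraction of that maximum. -/
theorem IsValue.abs_sub_le [Nonempty S] {Phat : S → A → S → ℝ} {Vhat : S → ℝ}
    (hPhat : IsKernel Phat) (hpol : IsPolicy pol) (hγ0 : 0 ≤ γ) (hγ1 : γ < 1)
    (hV : IsValue P pol r γ V) (hVhat : IsValue Phat pol r γ Vhat) {δ : ℝ}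
    (hδ : ∀ s a, |∑ s', P s a s' * V s' - ∑ s', Phat s a s' * V s'| ≤ δ) (s : S) :
    |V s - Vhat s| ≤ γ * δ / (1 - γ) := by
  obtain ⟨z, -, hz⟩ := exists_max_image univ (fun s => |V s - Vhat s|) univ_nonempty
  have hdecomp : ∀ s, V s - Vhat s = ∑ a, pol s a * (γ * ((∑ s', P s a s' * V s' -
      ∑ s', Phat s a s' * V s') + ∑ s', Phat s a s' * (V s' - Vhat s'))) := fun s => by
    rw [hV s, hVhat s, ← sum_sub_distrib]
    refine sum_congr rfl fun a _ => ?_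
    simp only [mul_sub, sum_sub_distrib]
    ring
  have hcontract : |V z - Vhat z| ≤ γ * (δ + |V z - Vhat z|) := by
    refine (congrArg abs (hdecomp z)).trans_le ?_
    refine (hpol z).abs_sum_mul_le fun a => ?_
    rw [abs_mul, abs_of_nonneg hγ0]
    exact mul_le_mul_of_nonneg_left ((abs_add_le _ _).trans (add_le_add (hδ z a)
      ((hPhat z a).abs_sum_mul_le fun s' => hz s' (mem_univ _)))) hγ0
  rw [le_div_iff₀ (sub_pos.mpr hγ1)]
  nlinarith [hz s (mem_univ _)]

end Value

theorem uniform_tv_value_gap_general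
    {S A : Type*} [Fintype S] [Fintype A] [Nonempty S]
    (P Phat : S → A → S → ℝ) (hP : IsKernel P) (hPhat : IsKernel Phat)
    (r : S → A → ℝ) (Rmax : ℝ) (hr : ∀ s a, 0 ≤ r s a ∧ r s a ≤ Rmax)
    (γ : ℝ) (hγ0 : 0 < γ) (hγ1 : γ < 1)
    (ρ₀ : S → ℝ) (hρ : IsPMF ρ₀)
    (pol : S → A → ℝ) (hpol : IsPolicy pol)
    (V Vhat : S → ℝ) (hV : IsValue P pol r γ V) (hVhat : IsValue Phat pol r γ Vhat) :
    |(∑ s, ρ₀ s * V s) - ∑ s, ρ₀ s * Vhat s| ≤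
      Rmax / (1 - γ) ^ 2 * ⨆ x : S × A, tvDist (P x.1 x.2) (Phat x.1 x.2) := by
  set ε := ⨆ x : S × A, tvDist (P x.1 x.2) (Phat x.1 x.2)
  have hV_mem : ∀ s, 0 ≤ V s ∧ V s ≤ Rmax / (1 - γ) := fun s =>
    ⟨hV.nonneg_of_reward_nonneg hP hpol hγ0.le hγ1 (fun s a => (hr s a).1) s,
      hV.le_of_reward_le hP hpol hγ0.le hγ1 (fun s a => (hr s a).2) s⟩
  have hC : 0 ≤ Rmax / (1 - γ) := (hV_mem (Classical.arbitrary S)).1.trans (hV_mem _).2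
  have hmodel : ∀ s a, |∑ s', P s a s' * V s' - ∑ s', Phat s a s' * V s'| ≤
      Rmax / (1 - γ) * ε := fun s a => by
    refine (abs_sum_mul_sub_sum_mul_le_tvDist ((hP s a).2.trans (hPhat s a).2.symm)
      hV_mem).trans ?_
    rw [sub_zero]
    exact mul_le_mul_of_nonneg_left (le_ciSup (f := fun x : S × A => tvDist (P x.1 x.2)
      (Phat x.1 x.2)) (Set.finite_range _).bddAbove (s, a)) hC
  have hmodel_nonneg : 0 ≤ Rmax / (1 - γ) * ε := mul_nonneg hC
    (Real.iSup_nonneg fun x => by unfold tvDist; positivity)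
  have hgap : ∀ s, |V s - Vhat s| ≤ Rmax / (1 - γ) ^ 2 * ε := fun s =>
    calc |V s - Vhat s| ≤ γ * (Rmax / (1 - γ) * ε) / (1 - γ) :=
          hV.abs_sub_le hPhat hpol hγ0.le hγ1 hVhat hmodel s
      _ ≤ Rmax / (1 - γ) * ε / (1 - γ) := div_le_div_of_nonneg_right
          (mul_le_of_le_one_left hmodel_nonneg hγ1.le) (sub_nonneg.mpr hγ1.le)
      _ = Rmax / (1 - γ) ^ 2 * ε := by field_simp
  rw [← sum_sub_distrib]
  simp only [← mul_sub]
  exact hρ.abs_sum_mul_le hgap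

/-- **Uniform one-step TV bound on the policy value gap.** -/
theorem uniform_tv_value_gap
    {S A : Type*} [Fintype S] [Fintype A] [Nonempty S] [Nonempty A]
    (P Phat : S → A → S → ℝ) (hP : IsKernel P) (hPhat : IsKernel Phat)
    (r : S → A → ℝ) (Rmax : ℝ) (hr : ∀ s a, 0 ≤ r s a ∧ r s a ≤ Rmax)
    (γ : ℝ) (hγ0 : 0 < γ) (hγ1 : γ < 1)
    (ρ₀ : S → ℝ) (hρ : IsPMF ρ₀)
    (pol : S → A → ℝ) (hpol : IsPolicy pol)
    (V Vhat : S → ℝ) (hV : IsValue P pol r γ V) (hVhat : IsValue Phat pol r γ Vhat) :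
    |(∑ s, ρ₀ s * V s) - ∑ s, ρ₀ s * Vhat s| ≤
      Rmax / (1 - γ) ^ 2 * ⨆ x : S × A, tvDist (P x.1 x.2) (Phat x.1 x.2) :=
  uniform_tv_value_gap_general P Phat hP hPhat r Rmax hr γ hγ0 hγ1 ρ₀ hρ pol hpol V Vhat hV hVhat
end

section
/- Wasserstein coverage guarantee: Let (S,d) be a finite metric space, P and P̂ two transition kernels on the same finite MDP (reward r with 0 ≤ r ≤ R_max, discount γ ∈ (0,1), initial distribution ρ₀), Π a nonempty set of stationary policies, and d_data a probability mass function on S × A satisfying κ-coverage for Π under P. Suppose for every π ∈ Π the value function V_π^{P̂} is L_v-Lipschitz with respect to d. Then for every π ∈ Π, |V_π(P) − V_π(P̂)| ≤ γ·L_v·κ · Σ_{(s,a)} d_data(s,a)·W₁(P(·|s,a), P̂(·|s,a)). -/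
/-!
Since `V̂` solves the Bellman equation under `P̂`, the difference `V - V̂` solves the Bellman
equation under `P` with one-step reward `γ ⟪P(·|s,a) - P̂(·|s,a), V̂⟫`; pairing it with the
occupancy measure `d_π` turns the value gap into `γ ∑ d_π(s,a) ⟪P(·|s,a) - P̂(·|s,a), V̂⟫`.
Each pairing is at most `L_v W₁(P(·|s,a), P̂(·|s,a))` because `V̂ / L_v` is a test function in
the dual form of `W₁`, and coverage replaces `d_π` by `κ d_data`.

A nonnegative occupancy exists: it solves `d = μ + γ Kᵀ d` for the stochastic state–action
kernel `K`, and a supersolution of `v = γ Kᵀ v` is nonnegative because the total mass of its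
negative part would otherwise contract by `γ`; this makes `I - γ Kᵀ` injective, hence invertible.
-/

open Finset Real

/-- 1-Wasserstein distance between two pmfs on a finite metric space
(Kantorovich–Rubinstein dual form). -/
noncomputable def w1 {X : Type*} [Fintype X] [MetricSpace X] (p q : X → ℝ) : ℝ :=
  sSup {y | ∃ f : X → ℝ, (∀ a b, |f a - f b| ≤ dist a b) ∧ y = ∑ x, (p x - q x) * f x}

section DiscountedFlow

open Matrix

variable {X : Type*} [Fintype X] {K : Matrix X X ℝ} {γ : ℝ}

theorem nonneg_of_discounted_vecMul_le (hK : ∀ x y, 0 ≤ K x y) (hK1 : ∀ x, ∑ y, K x y = 1)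
    (hγ0 : 0 ≤ γ) (hγ1 : γ < 1) {v : X → ℝ} (hv : ∀ x, γ * (v ᵥ* K) x ≤ v x) : 0 ≤ v := by
  set n : X → ℝ := fun x => max (-v x) 0
  have hn0 : ∀ x, 0 ≤ n x := fun x => le_max_right _ _
  have hn : ∀ x, n x ≤ γ * (n ᵥ* K) x := fun x => by
    have hvK : (-v) ᵥ* K ≤ n ᵥ* K := fun y =>
      sum_le_sum fun z _ => mul_le_mul_of_nonneg_right (le_max_left _ _) (hK z y)
    refine max_le ?_ (mul_nonneg hγ0 (sum_nonneg fun y _ => mul_nonneg (hn0 y) (hK y x)))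
    calc -v x ≤ γ * ((-v) ᵥ* K) x := by rw [neg_vecMul, Pi.neg_apply]; linarith [hv x]
      _ ≤ γ * (n ᵥ* K) x := by gcongr; exact hvK x
  -- `n = (-v)⁺` is a subsolution, while the stochastic flow preserves total mass
  have hmass : ∑ x, n x ≤ γ * ∑ x, n x := calc
    ∑ x, n x ≤ ∑ x, γ * (n ᵥ* K) x := sum_le_sum fun x _ => hn x
    _ = γ * ∑ x, n x := by
      simp only [vecMul, dotProduct, ← mul_sum]
      rw [sum_comm]
      simp [← mul_sum, hK1]
  have htotal : ∑ x, n x ≤ 0 := by nlinarith [sum_nonneg fun x (_ : x ∈ univ) => hn0 x]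
  intro x
  have : n x ≤ 0 := (single_le_sum (fun y _ => hn0 y) (mem_univ x)).trans htotal
  simpa [n] using this

theorem exists_nonneg_eq_add_discounted_vecMul (hK : ∀ x y, 0 ≤ K x y)
    (hK1 : ∀ x, ∑ y, K x y = 1) (hγ0 : 0 ≤ γ) (hγ1 : γ < 1) {μ : X → ℝ} (hμ : 0 ≤ μ) :
    ∃ v, 0 ≤ v ∧ v = μ + γ • (v ᵥ* K) := by
  set T : (X → ℝ) →ₗ[ℝ] X → ℝ := LinearMap.id - γ • K.vecMulLinear
  have hT : ∀ v, T v = v - γ • (v ᵥ* K) := fun v => rfl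
  have hinj : Function.Injective T := by
    refine (injective_iff_map_eq_zero T).mpr fun v hv => ?_
    rw [hT, sub_eq_zero] at hv
    have hle : ∀ w : X → ℝ, w = γ • (w ᵥ* K) → ∀ x, γ * (w ᵥ* K) x ≤ w x := fun w hw x =>
      (congrFun hw x).ge
    have h₁ := nonneg_of_discounted_vecMul_le hK hK1 hγ0 hγ1 (hle v hv)
    have h₂ := nonneg_of_discounted_vecMul_le hK hK1 hγ0 hγ1
      (hle (-v) (by rw [neg_vecMul, smul_neg, ← hv]))
    exact le_antisymm (neg_nonneg.mp h₂) h₁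
  obtain ⟨v, hv⟩ := LinearMap.injective_iff_surjective.mp hinj μ
  rw [hT, sub_eq_iff_eq_add'] at hv
  refine ⟨v, nonneg_of_discounted_vecMul_le hK hK1 hγ0 hγ1 fun x => ?_, hv.trans (add_comm _ _)⟩
  rw [congrFun hv x]
  simpa using hμ x

end DiscountedFlow

section MDP

variable {S A : Type*} [Fintype S] [Fintype A] {P : S → A → S → ℝ} {pol : S → A → ℝ}
  {ρ₀ : S → ℝ} {γ : ℝ}

def stateActionKernel (P : S → A → S → ℝ) (pol : S → A → ℝ) : Matrix (S × A) (S × A) ℝ :=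
  fun x y => P x.1 x.2 y.1 * pol y.1 y.2

theorem sum_stateActionKernel (hP : IsKernel P) (hpol : IsPolicy pol) (x : S × A) :
    ∑ y, stateActionKernel P pol x y = 1 := by
  simp only [stateActionKernel, Fintype.sum_prod_type, ← mul_sum, (hpol _).2, mul_one,
    (hP x.1 x.2).2]

theorem exists_isOcc_nonneg (hP : IsKernel P) (hpol : IsPolicy pol) (hρ : 0 ≤ ρ₀)
    (hγ0 : 0 ≤ γ) (hγ1 : γ < 1) : ∃ d, IsOcc P pol ρ₀ γ d ∧ ∀ s a, 0 ≤ d s a := by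
  obtain ⟨v, hv0, hv⟩ := exists_nonneg_eq_add_discounted_vecMul
    (fun (x y : S × A) => mul_nonneg ((hP x.1 x.2).1 y.1) ((hpol y.1).1 y.2))
    (sum_stateActionKernel hP hpol) hγ0 hγ1 (μ := fun x => pol x.1 x.2 * ρ₀ x.1)
    fun (x : S × A) => mul_nonneg ((hpol x.1).1 x.2) (hρ x.1)
  refine ⟨fun s a => v (s, a), fun s a => ?_, fun s a => hv0 (s, a)⟩
  show v (s, a) = pol s a * (ρ₀ s + γ * ∑ x : S × A, v x * P x.1 x.2 s)
  rw [congrFun hv (s, a)]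
  simp only [Pi.add_apply, Pi.smul_apply, smul_eq_mul, Matrix.vecMul, dotProduct, mul_add,
    mul_sum]
  exact congrArg _ (sum_congr rfl fun _ _ => by ring)

namespace IsOcc

theorem sum_mul_eq_of_bellman {d : S → A → ℝ} (hd : IsOcc P pol ρ₀ γ d) {g : S → ℝ}
    {h : S → A → ℝ} (hg : ∀ s, g s = ∑ a, pol s a * (h s a + γ * ∑ s', P s a s' * g s')) :
    ∑ s, ρ₀ s * g s = ∑ x : S × A, d x.1 x.2 * h x.1 x.2 := by
  set inflow : S → ℝ := fun s => γ * ∑ x : S × A, d x.1 x.2 * P x.1 x.2 s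
  have hQ : ∑ x : S × A, d x.1 x.2 * (h x.1 x.2 + γ * ∑ s', P x.1 x.2 s' * g s')
      = ∑ s, (ρ₀ s + inflow s) * g s := by
    rw [Fintype.sum_prod_type]
    refine sum_congr rfl fun s _ => ?_
    rw [hg s, mul_sum]
    exact sum_congr rfl fun a _ => by rw [hd s a]; ring
  have hflow : ∑ x : S × A, d x.1 x.2 * (γ * ∑ s', P x.1 x.2 s' * g s')
      = ∑ s, inflow s * g s := by
    simp only [inflow, mul_sum, sum_mul]
    rw [sum_comm]
    exact sum_congr rfl fun _ _ => sum_congr rfl fun _ _ => by ring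
  simp only [mul_add, add_mul, sum_add_distrib] at hQ
  linarith

theorem value_sub_eq {d : S → A → ℝ} (hd : IsOcc P pol ρ₀ γ d) {Phat : S → A → S → ℝ}
    {r : S → A → ℝ} {V Vhat : S → ℝ} (hV : IsValue P pol r γ V)
    (hVhat : IsValue Phat pol r γ Vhat) :
    ∑ s, ρ₀ s * V s - ∑ s, ρ₀ s * Vhat s =
      γ * ∑ x : S × A, d x.1 x.2 * ∑ s', (P x.1 x.2 s' - Phat x.1 x.2 s') * Vhat s' := by
  rw [← sum_sub_distrib, mul_sum]
  simp only [← mul_sub, mul_left_comm γ]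
  refine hd.sum_mul_eq_of_bellman (g := fun s => V s - Vhat s)
    (h := fun s a => γ * ∑ s', (P s a s' - Phat s a s') * Vhat s') fun s => ?_
  rw [hV s, hVhat s, ← sum_sub_distrib]
  refine sum_congr rfl fun a _ => ?_
  simp only [sub_mul, mul_sub, sum_sub_distrib]
  ring

end IsOcc

end MDP

section Wasserstein

variable {X : Type*} [Fintype X] {p q : X → ℝ}

theorem sum_sub_mul_sub_const (hpq : ∑ x, p x = ∑ x, q x) (f : X → ℝ) (c : ℝ) :
    ∑ x, (p x - q x) * (f x - c) = ∑ x, (p x - q x) * f x := by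
  simp only [mul_sub, sum_sub_distrib, ← sum_mul, hpq, sub_self, zero_mul, sub_zero]

variable [MetricSpace X]

theorem sum_sub_mul_le_w1 [Nonempty X] (hpq : ∑ x, p x = ∑ x, q x) {f : X → ℝ}
    (hf : ∀ a b, |f a - f b| ≤ dist a b) :
    ∑ x, (p x - q x) * f x ≤ w1 p q := by
  obtain ⟨x₀⟩ := ‹Nonempty X›
  refine le_csSup ⟨∑ x, |p x - q x| * dist x x₀, ?_⟩ ⟨f, hf, rfl⟩
  rintro _ ⟨g, hg, rfl⟩
  rw [← sum_sub_mul_sub_const hpq g (g x₀)]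
  refine sum_le_sum fun x _ => ?_
  calc (p x - q x) * (g x - g x₀) ≤ |p x - q x| * |g x - g x₀| := by
        rw [← abs_mul]; exact le_abs_self _
    _ ≤ |p x - q x| * dist x x₀ := by gcongr; exact hg x x₀

theorem w1_self (p : X → ℝ) : w1 p p = 0 := by
  have : {y | ∃ f : X → ℝ, (∀ a b, |f a - f b| ≤ dist a b) ∧ y = ∑ x, (p x - p x) * f x}
      = {0} := by
    ext y
    simp only [sub_self, zero_mul, sum_const_zero, Set.mem_ofPred_eq, Set.mem_singleton_iff]
    exact ⟨fun ⟨_, _, hy⟩ => hy, fun hy => ⟨0, fun a b => by simp, hy⟩⟩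
  rw [w1, this, csSup_singleton]

theorem sum_sub_mul_le_mul_w1 [Nonempty X] (hpq : ∑ x, p x = ∑ x, q x) {f : X → ℝ} {L : ℝ}
    (hf : ∀ a b, |f a - f b| ≤ L * dist a b) :
    ∑ x, (p x - q x) * f x ≤ L * w1 p q := by
  rcases lt_trichotomy L 0 with hL | rfl | hL
  · have : Subsingleton X := ⟨fun a b => dist_le_zero.mp <|
      nonpos_of_mul_nonneg_right ((abs_nonneg _).trans (hf a b)) hL⟩
    have hpq' : p = q := funext fun x => by
      simpa [Fintype.sum_subsingleton _ x] using hpq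
    simp [hpq', w1_self]
  · obtain ⟨x₀⟩ := ‹Nonempty X›
    have hconst : ∀ x, f x - f x₀ = 0 := fun x => by simpa using hf x x₀
    simp [← sum_sub_mul_sub_const hpq f (f x₀), hconst]
  · have hg : ∀ a b, |L⁻¹ * f a - L⁻¹ * f b| ≤ dist a b := fun a b => by
      rw [← mul_sub, abs_mul, abs_inv, abs_of_pos hL, inv_mul_le_iff₀ hL]
      exact hf a b
    calc ∑ x, (p x - q x) * f x = L * ∑ x, (p x - q x) * (L⁻¹ * f x) := by
          rw [mul_sum]; congr! 1 with x; field_simp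
      _ ≤ L * w1 p q := by gcongr; exact sum_sub_mul_le_w1 hpq hg

theorem abs_sum_sub_mul_le_mul_w1 [Nonempty X] (hpq : ∑ x, p x = ∑ x, q x) {f : X → ℝ} {L : ℝ}
    (hf : ∀ a b, |f a - f b| ≤ L * dist a b) :
    |∑ x, (p x - q x) * f x| ≤ L * w1 p q := by
  refine abs_le'.mpr ⟨sum_sub_mul_le_mul_w1 hpq hf, ?_⟩
  have hf' : ∀ a b, |-f a - -f b| ≤ L * dist a b := fun a b => by
    rw [← abs_neg]; convert hf a b using 2; ring
  simpa using sum_sub_mul_le_mul_w1 hpq hf'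

end Wasserstein

theorem wasserstein_coverage_guarantee_general
    {S A : Type*} [Fintype S] [Fintype A] [Nonempty S] [MetricSpace S]
    (P Phat : S → A → S → ℝ) (hP : IsKernel P) (hPhat : IsKernel Phat)
    (r : S → A → ℝ)
    (γ : ℝ) (hγ0 : 0 < γ) (hγ1 : γ < 1)
    (ρ₀ : S → ℝ) (hρ : IsPMF ρ₀)
    (Pol : Set (S → A → ℝ)) (hPol : ∀ p ∈ Pol, IsPolicy p)
    (ddata : S → A → ℝ)
    (κ : ℝ)
    (hcov : KappaCoverage P ρ₀ γ Pol ddata κ)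
    (Lv : ℝ)
    (hLip : ∀ p ∈ Pol, ∀ Vhat : S → ℝ, IsValue Phat p r γ Vhat →
      ∀ x y, |Vhat x - Vhat y| ≤ Lv * dist x y) :
    ∀ p ∈ Pol, ∀ V Vhat : S → ℝ, IsValue P p r γ V → IsValue Phat p r γ Vhat →
      |(∑ s, ρ₀ s * V s) - ∑ s, ρ₀ s * Vhat s| ≤
        γ * Lv * κ * ∑ x : S × A, ddata x.1 x.2 * w1 (P x.1 x.2) (Phat x.1 x.2) := by
  intro p hp V Vhat hV hVhat
  obtain ⟨d, hd, hd0⟩ := exists_isOcc_nonneg hP (hPol p hp) hρ.1 hγ0.le hγ1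
  have hdκ := hcov p hp d hd
  have hstep : ∀ x : S × A, |∑ s', (P x.1 x.2 s' - Phat x.1 x.2 s') * Vhat s'| ≤
      Lv * w1 (P x.1 x.2) (Phat x.1 x.2) := fun x =>
    abs_sum_sub_mul_le_mul_w1 ((hP x.1 x.2).2.trans (hPhat x.1 x.2).2.symm)
      (hLip p hp Vhat hVhat)
  have hterm : ∀ x : S × A, |d x.1 x.2 * ∑ s', (P x.1 x.2 s' - Phat x.1 x.2 s') * Vhat s'| ≤
      κ * ddata x.1 x.2 * (Lv * w1 (P x.1 x.2) (Phat x.1 x.2)) := fun x => by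
    rw [abs_mul, abs_of_nonneg (hd0 x.1 x.2)]
    exact mul_le_mul (hdκ x.1 x.2) (hstep x) (abs_nonneg _) ((hd0 x.1 x.2).trans (hdκ x.1 x.2))
  rw [hd.value_sub_eq hV hVhat, abs_mul, abs_of_pos hγ0]
  calc γ * |∑ x : S × A, d x.1 x.2 * ∑ s', (P x.1 x.2 s' - Phat x.1 x.2 s') * Vhat s'|
      ≤ γ * ∑ x : S × A, κ * ddata x.1 x.2 * (Lv * w1 (P x.1 x.2) (Phat x.1 x.2)) := by
        gcongr
        exact (abs_sum_le_sum_abs _ _).trans (sum_le_sum fun x _ => hterm x)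
    _ = γ * Lv * κ * ∑ x : S × A, ddata x.1 x.2 * w1 (P x.1 x.2) (Phat x.1 x.2) := by
        simp only [mul_sum]
        exact sum_congr rfl fun _ _ => by ring

/-- **Wasserstein coverage guarantee.** If the simulator value functions of all policies
in `Pol` are `Lv`-Lipschitz and `ddata` κ-covers their occupancies, then each value gap
is bounded by the `ddata`-weighted one-step `W₁` error. -/
theorem wasserstein_coverage_guarantee
    {S A : Type*} [Fintype S] [Fintype A] [Nonempty S] [Nonempty A] [MetricSpace S]
    (P Phat : S → A → S → ℝ) (hP : IsKernel P) (hPhat : IsKernel Phat)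
    (r : S → A → ℝ) (Rmax : ℝ) (hr : ∀ s a, 0 ≤ r s a ∧ r s a ≤ Rmax)
    (γ : ℝ) (hγ0 : 0 < γ) (hγ1 : γ < 1)
    (ρ₀ : S → ℝ) (hρ : IsPMF ρ₀)
    (Pol : Set (S → A → ℝ)) (hPolNe : Pol.Nonempty) (hPol : ∀ p ∈ Pol, IsPolicy p)
    (ddata : S → A → ℝ) (hdata : IsPMF (fun x : S × A => ddata x.1 x.2))
    (κ : ℝ) (hκ : 0 < κ)
    (hcov : KappaCoverage P ρ₀ γ Pol ddata κ)
    (Lv : ℝ)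
    (hLip : ∀ p ∈ Pol, ∀ Vhat : S → ℝ, IsValue Phat p r γ Vhat →
      ∀ x y, |Vhat x - Vhat y| ≤ Lv * dist x y) :
    ∀ p ∈ Pol, ∀ V Vhat : S → ℝ, IsValue P p r γ V → IsValue Phat p r γ Vhat →
      |(∑ s, ρ₀ s * V s) - ∑ s, ρ₀ s * Vhat s| ≤
        γ * Lv * κ * ∑ x : S × A, ddata x.1 x.2 * w1 (P x.1 x.2) (Phat x.1 x.2) :=
  wasserstein_coverage_guarantee_general P Phat hP hPhat r γ hγ0 hγ1 ρ₀ hρ Pol hPol ddata κ hcov Lv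
    hLip
end
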